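/- Let {ξ_i}_{i≥0} be i.i.d. standard normal random variables, β > 0, and define the last exit time τ(ξ) = max{i ≥ 0 : ξ_i > βi}. With u_β(y) = (a(β) + y/a(β)) β^{-1} and a(β) = √(2(ln β^{-1} - ln(2 ln β^{-1}) + ln((2π)^{-1/2}))), one has lim_{β→0} P(τ(ξ) ≤ u_β(y)) = exp(-e^{-y}) for every y ∈ ℝ. -/

import Mathlib

/-!
By independence, `P(ξ_i ≤ x + iβ for all i) = ∏ᵢ (1 - Q(x + iβ))`, where `Q = gaussTail` is
the Gaussian tail; as all `Q(x + iβ)` are small, the product is `exp (-(1 + o(1)) ∑ᵢ Q(x + iβ))`.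
The sum is a Riemann sum of mesh `β` for `T(x) = ∫_x^∞ Q` (`gaussTailIntegral`), so it is
`T(x)/β` up to an error `Q(x)`. The Mills-ratio bounds give `T(x) ∼ φ(x)/x²`; the
normalisation `a(β)` is chosen so that `φ(a)/a² ∼ β`, and moving from `a` to `a + y/a`
multiplies `φ(x)/x²` by `e^{-y}` asymptotically. Hence `T(x)/β → e^{-y}` for
`x = ⌈u_β(y)⌉ β`, and the probability tends to `exp (-e^{-y})`.
-/

open Filter Real MeasureTheory ProbabilityTheory

noncomputable def aNorm (β : ℝ) : ℝ :=
  Real.sqrt (2 * (Real.log β⁻¹ - Real.log (2 * Real.log β⁻¹) +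
    Real.log ((2 * π) ^ (-(1 : ℝ) / 2))))

noncomputable def uNorm (β y : ℝ) : ℝ := (aNorm β + y / aNorm β) / β

open Set
open scoped Topology

local notation "φ" => gaussianPDFReal 0 1

lemma gaussianPDFReal_zero_one (x : ℝ) : φ x = (√(2 * π))⁻¹ * exp (-x ^ 2 / 2) := by
  simp [gaussianPDFReal]

lemma hasDerivAt_gaussianPDFReal_zero_one (x : ℝ) : HasDerivAt φ (-x * φ x) x := by
  have h : HasDerivAt (fun t : ℝ => -t ^ 2 / 2) (-x) x :=
    ((hasDerivAt_pow 2 x).fun_neg.div_const 2).congr_deriv (by push_cast; ring)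
  rw [funext gaussianPDFReal_zero_one]
  exact (h.exp.const_mul (√(2 * π))⁻¹).congr_deriv (by ring)

lemma continuous_gaussianPDFReal_zero_one : Continuous φ :=
  continuous_iff_continuousAt.2 fun x => (hasDerivAt_gaussianPDFReal_zero_one x).continuousAt

lemma tendsto_gaussianPDFReal_zero_one_atTop : Tendsto φ atTop (𝓝 0) := by
  have h : Tendsto (fun x : ℝ => -x ^ 2 / 2) atTop atBot :=
    (tendsto_neg_atTop_atBot.comp (tendsto_pow_atTop two_ne_zero)).atBot_div_const two_pos
  simpa [funext gaussianPDFReal_zero_one] using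
    (tendsto_exp_atBot.comp h).const_mul (√(2 * π))⁻¹

noncomputable def gaussTail (x : ℝ) : ℝ := ∫ t in Ioi x, φ t

lemma gaussTail_nonneg (x : ℝ) : 0 ≤ gaussTail x :=
  setIntegral_nonneg measurableSet_Ioi fun t _ => gaussianPDFReal_nonneg 0 1 t

lemma gaussTail_antitone : Antitone gaussTail := fun _ _ hxy =>
  setIntegral_mono_set (integrable_gaussianPDFReal 0 1).integrableOn
    (.of_forall fun t => gaussianPDFReal_nonneg 0 1 t) (.of_forall (Ioi_subset_Ioi hxy))

lemma gaussTail_eq_sub_intervalIntegral (x : ℝ) :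
    gaussTail x = gaussTail 0 - ∫ t in 0..x, φ t :=
  eq_sub_of_add_eq' (intervalIntegral.integral_interval_add_Ioi
    (integrable_gaussianPDFReal 0 1).integrableOn (integrable_gaussianPDFReal 0 1).integrableOn)

lemma hasDerivAt_gaussTail (x : ℝ) : HasDerivAt gaussTail (-φ x) x := by
  rw [funext gaussTail_eq_sub_intervalIntegral]
  exact (continuous_gaussianPDFReal_zero_one.integral_hasStrictDerivAt 0 x).hasDerivAt.const_sub _

lemma tendsto_gaussTail_atTop : Tendsto gaussTail atTop (𝓝 0) := by
  have h := (tendsto_const_nhds (x := gaussTail 0)).sub (intervalIntegral_tendsto_integral_Ioi 0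
    (integrable_gaussianPDFReal 0 1).integrableOn tendsto_id)
  rw [funext gaussTail_eq_sub_intervalIntegral]
  simpa [gaussTail] using h

lemma gaussTail_le_one (x : ℝ) : gaussTail x ≤ 1 :=
  calc gaussTail x ≤ ∫ t, φ t :=
        setIntegral_le_integral (integrable_gaussianPDFReal 0 1)
          (.of_forall (gaussianPDFReal_nonneg 0 1))
    _ = 1 := integral_gaussianPDFReal_eq_one 0 one_ne_zero

lemma nonneg_of_hasDerivAt_nonpos_of_tendsto {g g' : ℝ → ℝ} {x : ℝ}
    (hg : ∀ t ≥ x, HasDerivAt g (g' t) t) (hg' : ∀ t ≥ x, g' t ≤ 0)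
    (hlim : Tendsto g atTop (𝓝 0)) : 0 ≤ g x := by
  have hanti : AntitoneOn g (Ici x) :=
    antitoneOn_of_hasDerivWithinAt_nonpos (convex_Ici x)
      (fun t ht => (hg t ht).continuousAt.continuousWithinAt)
      (fun t ht => (hg t (interior_subset ht)).hasDerivWithinAt)
      (fun t ht => hg' t (interior_subset ht))
  refine le_of_tendsto hlim ?_
  filter_upwards [eventually_ge_atTop x] with t ht
  exact hanti self_mem_Ici ht ht

lemma hasDerivAt_gaussianPDFReal_mul {p p' : ℝ → ℝ} {t : ℝ} (hp : HasDerivAt p (p' t) t) :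
    HasDerivAt (fun s => φ s * p s) (φ t * (p' t - t * p t)) t :=
  ((hasDerivAt_gaussianPDFReal_zero_one t).mul hp).congr_deriv (by ring)

lemma tendsto_gaussianPDFReal_mul {p : ℝ → ℝ} (hp : Tendsto p atTop (𝓝 0)) :
    Tendsto (fun s => φ s * p s) atTop (𝓝 0) := by
  simpa using tendsto_gaussianPDFReal_zero_one_atTop.mul hp

/-- Both sides vanish at infinity, so the sign of the derivative of their difference,
`φ t * (1 + p' t - t * p t)`, decides the inequality. -/
lemma gaussTail_le_gaussianPDFReal_mul_of_hasDerivAt {p p' : ℝ → ℝ} {x : ℝ}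
    (hp : ∀ t ≥ x, HasDerivAt p (p' t) t) (hlim : Tendsto p atTop (𝓝 0))
    (hineq : ∀ t ≥ x, 1 + p' t ≤ t * p t) : gaussTail x ≤ φ x * p x := by
  have key := nonneg_of_hasDerivAt_nonpos_of_tendsto (g := fun t => φ t * p t - gaussTail t)
    (fun t ht => (hasDerivAt_gaussianPDFReal_mul (hp t ht)).sub (hasDerivAt_gaussTail t))
    (fun t ht => by nlinarith [hineq t ht, gaussianPDFReal_nonneg 0 1 t])
    (by simpa using (tendsto_gaussianPDFReal_mul hlim).sub tendsto_gaussTail_atTop)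
  exact sub_nonneg.1 key

lemma gaussianPDFReal_mul_le_gaussTail_of_hasDerivAt {p p' : ℝ → ℝ} {x : ℝ}
    (hp : ∀ t ≥ x, HasDerivAt p (p' t) t) (hlim : Tendsto p atTop (𝓝 0))
    (hineq : ∀ t ≥ x, t * p t ≤ 1 + p' t) : φ x * p x ≤ gaussTail x := by
  have key := nonneg_of_hasDerivAt_nonpos_of_tendsto (g := fun t => gaussTail t - φ t * p t)
    (fun t ht => (hasDerivAt_gaussTail t).sub (hasDerivAt_gaussianPDFReal_mul (hp t ht)))
    (fun t ht => by nlinarith [hineq t ht, gaussianPDFReal_nonneg 0 1 t])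
    (by simpa using tendsto_gaussTail_atTop.sub (tendsto_gaussianPDFReal_mul hlim))
  exact sub_nonneg.1 key

lemma hasDerivAt_inv_pow_succ (n : ℕ) {t : ℝ} (ht : t ≠ 0) :
    HasDerivAt (fun s : ℝ => (s ^ (n + 1))⁻¹) (-(n + 1) * (t ^ (n + 2))⁻¹) t :=
  ((hasDerivAt_pow (n + 1) t).fun_inv (pow_ne_zero _ ht)).congr_deriv (by
    push_cast; field_simp; ring)

lemma tendsto_inv_pow_succ_atTop (n : ℕ) :
    Tendsto (fun s : ℝ => (s ^ (n + 1))⁻¹) atTop (𝓝 0) :=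
  tendsto_inv_atTop_zero.comp (tendsto_pow_atTop n.succ_ne_zero)

lemma gaussTail_le_gaussianPDFReal_div {x : ℝ} (hx : 0 < x) : gaussTail x ≤ φ x / x := by
  have h := gaussTail_le_gaussianPDFReal_mul_of_hasDerivAt (x := x)
    (fun t ht => hasDerivAt_inv_pow_succ 0 (hx.trans_le ht).ne') (tendsto_inv_pow_succ_atTop 0)
    (fun t ht => by
      have := hx.trans_le ht
      push_cast; field_simp; ring_nf; nlinarith)
  simpa [div_eq_mul_inv] using h

lemma gaussianPDFReal_mul_inv_sub_le_gaussTail {x : ℝ} (hx : 0 < x) :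
    φ x * (x⁻¹ - (x ^ 3)⁻¹) ≤ gaussTail x := by
  have h := gaussianPDFReal_mul_le_gaussTail_of_hasDerivAt
    (p := fun s => (s ^ 1)⁻¹ - (s ^ 3)⁻¹) (x := x)
    (fun t ht => (hasDerivAt_inv_pow_succ 0 (hx.trans_le ht).ne').fun_sub
      (hasDerivAt_inv_pow_succ 2 (hx.trans_le ht).ne'))
    (by simpa using (tendsto_inv_pow_succ_atTop 0).sub (tendsto_inv_pow_succ_atTop 2))
    (fun t ht => by
      have := hx.trans_le ht
      push_cast; field_simp; ring_nf; nlinarith)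
  simpa using h

lemma gaussTail_le_gaussianPDFReal_mul_inv_sub_add {x : ℝ} (hx : 0 < x) :
    gaussTail x ≤ φ x * (x⁻¹ - (x ^ 3)⁻¹ + 3 * (x ^ 5)⁻¹) := by
  have h := gaussTail_le_gaussianPDFReal_mul_of_hasDerivAt
    (p := fun s => (s ^ 1)⁻¹ - (s ^ 3)⁻¹ + 3 * (s ^ 5)⁻¹) (x := x)
    (fun t ht => ((hasDerivAt_inv_pow_succ 0 (hx.trans_le ht).ne').fun_sub
      (hasDerivAt_inv_pow_succ 2 (hx.trans_le ht).ne')).fun_add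
      ((hasDerivAt_inv_pow_succ 4 (hx.trans_le ht).ne').const_mul 3))
    (by simpa using ((tendsto_inv_pow_succ_atTop 0).sub (tendsto_inv_pow_succ_atTop 2)).add
          ((tendsto_inv_pow_succ_atTop 4).const_mul 3))
    (fun t ht => by
      have := hx.trans_le ht
      push_cast; field_simp; ring_nf; nlinarith)
  simpa using h

/-- Closed form of `∫ t in Ioi x, gaussTail t`. -/
noncomputable def gaussTailIntegral (x : ℝ) : ℝ := φ x - x * gaussTail x

lemma hasDerivAt_gaussTailIntegral (x : ℝ) :
    HasDerivAt gaussTailIntegral (-gaussTail x) x :=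
  ((hasDerivAt_gaussianPDFReal_zero_one x).sub
    ((hasDerivAt_id x).mul (hasDerivAt_gaussTail x))).congr_deriv (by simp)

lemma gaussTailIntegral_nonneg {x : ℝ} (hx : 0 < x) : 0 ≤ gaussTailIntegral x := by
  have h := gaussTail_le_gaussianPDFReal_div hx
  rw [le_div_iff₀ hx] at h
  rw [gaussTailIntegral]
  linarith

lemma gaussTailIntegral_le {x : ℝ} (hx : 0 < x) : gaussTailIntegral x ≤ φ x / x ^ 2 := by
  have h := mul_le_mul_of_nonneg_left (gaussianPDFReal_mul_inv_sub_le_gaussTail hx) hx.le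
  have e : x * (φ x * (x⁻¹ - (x ^ 3)⁻¹)) = φ x - φ x / x ^ 2 := by field_simp
  rw [gaussTailIntegral]
  linarith

lemma le_gaussTailIntegral {x : ℝ} (hx : 0 < x) :
    φ x / x ^ 2 * (1 - 3 / x ^ 2) ≤ gaussTailIntegral x := by
  have h := mul_le_mul_of_nonneg_left (gaussTail_le_gaussianPDFReal_mul_inv_sub_add hx) hx.le
  have e : x * (φ x * (x⁻¹ - (x ^ 3)⁻¹ + 3 * (x ^ 5)⁻¹)) =
      φ x - φ x / x ^ 2 * (1 - 3 / x ^ 2) := by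
    field_simp; ring
  rw [gaussTailIntegral]
  linarith

lemma tendsto_gaussTailIntegral_div_atTop :
    Tendsto (fun x => gaussTailIntegral x / (φ x / x ^ 2)) atTop (𝓝 1) := by
  have h3 : Tendsto (fun x : ℝ => 3 / x ^ 2) atTop (𝓝 0) :=
    tendsto_const_nhds.div_atTop (tendsto_pow_atTop two_ne_zero)
  have hlow : Tendsto (fun x : ℝ => 1 - 3 / x ^ 2) atTop (𝓝 1) := by
    simpa using tendsto_const_nhds.sub h3
  refine tendsto_of_tendsto_of_tendsto_of_le_of_le' hlow tendsto_const_nhds ?_ ?_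
  all_goals
    filter_upwards [eventually_gt_atTop 0] with x hx
    have hφ : 0 < φ x / x ^ 2 := div_pos (gaussianPDFReal_pos 0 1 x one_ne_zero) (by positivity)
  · exact (le_div_iff₀ hφ).2 (by linarith [le_gaussTailIntegral hx])
  · exact (div_le_one hφ).2 (gaussTailIntegral_le hx)

lemma tendsto_gaussTailIntegral_atTop : Tendsto gaussTailIntegral atTop (𝓝 0) := by
  have h : Tendsto (fun x : ℝ => φ x / x ^ 2) atTop (𝓝 0) := by
    simpa using tendsto_gaussianPDFReal_zero_one_atTop.div_atTop (tendsto_pow_atTop two_ne_zero)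
  refine tendsto_of_tendsto_of_tendsto_of_le_of_le' tendsto_const_nhds h ?_ ?_
  all_goals filter_upwards [eventually_gt_atTop 0] with x hx
  exacts [gaussTailIntegral_nonneg hx, gaussTailIntegral_le hx]

lemma gaussTailIntegral_sub_bounds {a b : ℝ} (hab : a ≤ b) :
    (b - a) * gaussTail b ≤ gaussTailIntegral a - gaussTailIntegral b ∧
      gaussTailIntegral a - gaussTailIntegral b ≤ (b - a) * gaussTail a := by
  rcases hab.eq_or_lt with rfl | hab
  · simp
  obtain ⟨c, hc, hslope⟩ := exists_hasDerivAt_eq_slope gaussTailIntegral (fun t => -gaussTail t)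
    hab (fun t _ => (hasDerivAt_gaussTailIntegral t).continuousAt.continuousWithinAt)
    (fun t _ => hasDerivAt_gaussTailIntegral t)
  rw [eq_div_iff (sub_pos.2 hab).ne'] at hslope
  have hb := gaussTail_antitone hc.2.le
  have ha := gaussTail_antitone hc.1.le
  constructor <;> nlinarith [sub_pos.2 hab]

lemma gaussianPDFReal_add_div {x : ℝ} (hx : x ≠ 0) (y : ℝ) :
    φ (x + y / x) = φ x * exp (-y - y ^ 2 / (2 * x ^ 2)) := by
  simp only [gaussianPDFReal_zero_one, mul_assoc, ← exp_add]
  congr 2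
  field_simp
  ring

lemma tendsto_gaussTailIntegral_add_div_div (y : ℝ) :
    Tendsto (fun x => gaussTailIntegral (x + y / x) / (φ x / x ^ 2)) atTop (𝓝 (exp (-y))) := by
  have hyx : Tendsto (fun x : ℝ => y / x) atTop (𝓝 0) := tendsto_const_nhds.div_atTop tendsto_id
  have hw : Tendsto (fun x : ℝ => x + y / x) atTop atTop := tendsto_id.atTop_add hyx
  have hexp : Tendsto (fun x : ℝ => exp (-y - y ^ 2 / (2 * x ^ 2))) atTop (𝓝 (exp (-y))) := by
    have : Tendsto (fun x : ℝ => y ^ 2 / (2 * x ^ 2)) atTop (𝓝 0) :=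
      tendsto_const_nhds.div_atTop ((tendsto_pow_atTop two_ne_zero).const_mul_atTop two_pos)
    simpa using (tendsto_const_nhds.sub this).rexp
  have hsq : Tendsto (fun x : ℝ => (1 + y / x ^ 2)⁻¹ ^ 2) atTop (𝓝 1) := by
    have : Tendsto (fun x : ℝ => y / x ^ 2) atTop (𝓝 0) :=
      tendsto_const_nhds.div_atTop (tendsto_pow_atTop two_ne_zero)
    simpa using ((tendsto_const_nhds.add this).inv₀ (by norm_num : (1 : ℝ) + 0 ≠ 0)).pow 2
  have h := ((tendsto_gaussTailIntegral_div_atTop.comp hw).mul hexp).mul hsq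
  rw [one_mul, mul_one] at h
  refine h.congr' ?_
  filter_upwards [eventually_gt_atTop 0, hw.eventually_gt_atTop 0] with x hx hwx
  have hφ := gaussianPDFReal_pos 0 1 x one_ne_zero
  have hxy : 0 < x ^ 2 + y := by
    rw [show x ^ 2 + y = x * (x + y / x) by field_simp]
    positivity
  simp only [Function.comp_apply, gaussianPDFReal_add_div hx.ne']
  field_simp

lemma gaussTailIntegral_sub_succ_bounds {β : ℝ} (hβ : 0 ≤ β) (x : ℝ) (i : ℕ) :
    β * gaussTail (x + (i + 1 : ℕ) * β) ≤
        gaussTailIntegral (x + i * β) - gaussTailIntegral (x + (i + 1 : ℕ) * β) ∧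
      gaussTailIntegral (x + i * β) - gaussTailIntegral (x + (i + 1 : ℕ) * β) ≤
        β * gaussTail (x + i * β) := by
  have h := gaussTailIntegral_sub_bounds (a := x + i * β) (b := x + (i + 1 : ℕ) * β)
    (by push_cast; linarith)
  rwa [show x + (i + 1 : ℕ) * β - (x + i * β) = β by push_cast; ring] at h

lemma gaussTailIntegral_sub_eq_sum (β x : ℝ) (n : ℕ) :
    gaussTailIntegral x - gaussTailIntegral (x + n * β) = ∑ i ∈ Finset.range n,
      (gaussTailIntegral (x + i * β) - gaussTailIntegral (x + (i + 1 : ℕ) * β)) := by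
  simpa using (Finset.sum_range_sub' (fun i : ℕ => gaussTailIntegral (x + i * β)) n).symm

lemma gaussTailIntegral_sub_le_mul_sum {β : ℝ} (hβ : 0 ≤ β) (x : ℝ) (n : ℕ) :
    gaussTailIntegral x - gaussTailIntegral (x + n * β) ≤
      β * ∑ i ∈ Finset.range n, gaussTail (x + i * β) := by
  rw [gaussTailIntegral_sub_eq_sum, Finset.mul_sum]
  exact Finset.sum_le_sum fun i _ => (gaussTailIntegral_sub_succ_bounds hβ x i).2

lemma mul_sum_le_gaussTailIntegral_sub {β : ℝ} (hβ : 0 ≤ β) (x : ℝ) (n : ℕ) :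
    β * ∑ i ∈ Finset.range n, gaussTail (x + (i + 1 : ℕ) * β) ≤
      gaussTailIntegral x - gaussTailIntegral (x + n * β) := by
  rw [gaussTailIntegral_sub_eq_sum, Finset.mul_sum]
  exact Finset.sum_le_sum fun i _ => (gaussTailIntegral_sub_succ_bounds hβ x i).1

lemma sum_gaussTail_le {x β : ℝ} (hx : 0 < x) (hβ : 0 < β) (n : ℕ) :
    ∑ i ∈ Finset.range n, gaussTail (x + i * β) ≤ gaussTail x + gaussTailIntegral x / β := by
  have hsub := mul_sum_le_gaussTailIntegral_sub hβ.le x n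
  have hT := gaussTailIntegral_nonneg (show 0 < x + n * β by positivity)
  have hshift : ∑ i ∈ Finset.range (n + 1), gaussTail (x + i * β) =
      ∑ i ∈ Finset.range n, gaussTail (x + (i + 1 : ℕ) * β) + gaussTail x := by
    simp [Finset.sum_range_succ']
  calc ∑ i ∈ Finset.range n, gaussTail (x + i * β)
      ≤ ∑ i ∈ Finset.range (n + 1), gaussTail (x + i * β) :=
        Finset.sum_le_sum_of_subset_of_nonneg (Finset.range_mono n.le_succ)
          fun _ _ _ => gaussTail_nonneg _
    _ ≤ gaussTail x + gaussTailIntegral x / β := by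
        rw [hshift, add_comm, add_le_add_iff_left, le_div_iff₀ hβ]
        linarith

lemma exp_neg_mul_le_one_sub {q ε : ℝ} (hq : 0 ≤ q) (hqε : q ≤ ε) (hε : ε ≤ 1 / 2) :
    exp (-((1 + 2 * ε) * q)) ≤ 1 - q := by
  have hz : 1 ≤ (1 - q) * (1 + (1 + 2 * ε) * q) := by
    nlinarith [mul_nonneg hq (sub_nonneg.2 hqε),
      mul_nonneg (mul_nonneg hq (hq.trans hqε)) (by linarith : (0 : ℝ) ≤ 1 - 2 * q)]
  set z := (1 + 2 * ε) * q
  have hexp : exp (-z) * exp z = 1 := by rw [← exp_add, neg_add_cancel, exp_zero]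
  nlinarith [exp_pos (-z), mul_le_mul_of_nonneg_left (add_one_le_exp z)
    (mul_nonneg (exp_pos (-z)).le (by linarith : (0 : ℝ) ≤ 1 - q))]

lemma exp_neg_mul_sum_le_prod_one_sub {ι : Type*} (s : Finset ι) {q : ι → ℝ} {ε : ℝ}
    (hq : ∀ i ∈ s, 0 ≤ q i ∧ q i ≤ ε) (hε : ε ≤ 1 / 2) :
    exp (-((1 + 2 * ε) * ∑ i ∈ s, q i)) ≤ ∏ i ∈ s, (1 - q i) := by
  rw [Finset.mul_sum, ← Finset.sum_neg_distrib, exp_sum]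
  exact Finset.prod_le_prod (fun _ _ => (exp_pos _).le)
    fun i hi => exp_neg_mul_le_one_sub (hq i hi).1 (hq i hi).2 hε

lemma prod_one_sub_le_exp_neg_sum {ι : Type*} (s : Finset ι) {q : ι → ℝ}
    (hq : ∀ i ∈ s, q i ≤ 1) : ∏ i ∈ s, (1 - q i) ≤ exp (-∑ i ∈ s, q i) := by
  rw [← Finset.sum_neg_distrib, exp_sum]
  exact Finset.prod_le_prod (fun i hi => sub_nonneg.2 (hq i hi)) fun i _ => one_sub_le_exp_neg _

section Probability

variable {Ω : Type*} [MeasurableSpace Ω] {μ : Measure Ω}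

lemma measureReal_le_of_map_eq_gaussianReal {Y : Ω → ℝ} (hY : Measurable Y)
    (hlaw : μ.map Y = gaussianReal 0 1) (c : ℝ) :
    μ.real {ω | Y ω ≤ c} = 1 - gaussTail c := by
  rw [show {ω | Y ω ≤ c} = Y ⁻¹' Iic c from rfl, ← map_measureReal_apply hY measurableSet_Iic,
    hlaw, ← compl_Ioi, probReal_compl_eq_one_sub measurableSet_Ioi, measureReal_def,
    gaussianReal_apply_eq_integral 0 one_ne_zero]
  exact congrArg (1 - ·) (ENNReal.toReal_ofReal (gaussTail_nonneg c))

variable [IsProbabilityMeasure μ] {X : ℕ → Ω → ℝ}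

lemma tendsto_prod_one_sub_gaussTail (hmeas : ∀ i, Measurable (X i)) (hindep : iIndepFun X μ)
    (hlaw : ∀ i, μ.map (X i) = gaussianReal 0 1) (c : ℕ → ℝ) :
    Tendsto (fun n => ∏ i ∈ Finset.range n, (1 - gaussTail (c i))) atTop
      (𝓝 (μ.real {ω | ∀ i, X i ω ≤ c i})) := by
  set E : ℕ → Set Ω := fun n => ⋂ i ∈ Finset.range n, X i ⁻¹' Iic (c i)
  have hE : ∀ n, μ.real (E n) = ∏ i ∈ Finset.range n, (1 - gaussTail (c i)) := fun n => by
    rw [measureReal_def, hindep.meas_biInter fun i _ => ⟨_, measurableSet_Iic, rfl⟩,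
      ENNReal.toReal_prod]
    exact Finset.prod_congr rfl fun i _ =>
      measureReal_le_of_map_eq_gaussianReal (hmeas i) (hlaw i) _
  have hanti : Antitone E := fun m n hmn =>
    biInter_subset_biInter_left (by simpa using Finset.range_mono hmn)
  have hlim := tendsto_measure_iInter_atTop (s := E)
    (fun n => (MeasurableSet.biInter (Finset.range n).countable_toSet
      fun i _ => hmeas i measurableSet_Iic).nullMeasurableSet) hanti ⟨0, measure_ne_top μ _⟩
  have hinter : ⋂ n, E n = {ω | ∀ i, X i ω ≤ c i} := by
    ext ω
    simp only [E, mem_iInter, Finset.mem_range, mem_preimage, mem_Iic]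
    exact ⟨fun h i => h (i + 1) i i.lt_succ_self, fun h n i _ => h i⟩
  rw [hinter] at hlim
  exact ((ENNReal.tendsto_toReal (measure_ne_top μ _)).comp hlim).congr hE

lemma measureReal_forall_le_le_exp (hmeas : ∀ i, Measurable (X i)) (hindep : iIndepFun X μ)
    (hlaw : ∀ i, μ.map (X i) = gaussianReal 0 1) {β : ℝ} (hβ : 0 < β) (x : ℝ) :
    μ.real {ω | ∀ i : ℕ, X i ω ≤ x + i * β} ≤ exp (-(gaussTailIntegral x / β)) := by
  have hshift : Tendsto (fun n : ℕ => x + n * β) atTop atTop :=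
    tendsto_atTop_add_const_left _ _ (tendsto_natCast_atTop_atTop.atTop_mul_const hβ)
  have hbound : Tendsto (fun n : ℕ => exp (-((gaussTailIntegral x -
      gaussTailIntegral (x + n * β)) / β))) atTop (𝓝 (exp (-(gaussTailIntegral x / β)))) := by
    simpa using ((tendsto_const_nhds.sub (tendsto_gaussTailIntegral_atTop.comp hshift)).div_const
      β).neg.rexp
  refine le_of_tendsto_of_tendsto (tendsto_prod_one_sub_gaussTail hmeas hindep hlaw _) hbound
    (.of_forall fun n => ?_)
  refine (prod_one_sub_le_exp_neg_sum _ fun i _ => gaussTail_le_one _).trans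
    (exp_le_exp.2 (neg_le_neg ?_))
  rw [div_le_iff₀ hβ]
  linarith [gaussTailIntegral_sub_le_mul_sum hβ.le x n]

lemma exp_le_measureReal_forall_le (hmeas : ∀ i, Measurable (X i)) (hindep : iIndepFun X μ)
    (hlaw : ∀ i, μ.map (X i) = gaussianReal 0 1) {x β : ℝ} (hx : 0 < x) (hβ : 0 < β)
    (hQ : gaussTail x ≤ 1 / 2) :
    exp (-((1 + 2 * gaussTail x) * (gaussTail x + gaussTailIntegral x / β))) ≤
      μ.real {ω | ∀ i : ℕ, X i ω ≤ x + i * β} := by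
  refine ge_of_tendsto (tendsto_prod_one_sub_gaussTail hmeas hindep hlaw _)
    (.of_forall fun n => ?_)
  have hq : ∀ i ∈ Finset.range n, 0 ≤ gaussTail (x + i * β) ∧ gaussTail (x + i * β) ≤ gaussTail x :=
    fun i _ => ⟨gaussTail_nonneg _, gaussTail_antitone (le_add_of_nonneg_right (by positivity))⟩
  refine le_trans (exp_le_exp.2 (neg_le_neg ?_)) (exp_neg_mul_sum_le_prod_one_sub _ hq hQ)
  exact mul_le_mul_of_nonneg_left (sum_gaussTail_le hx hβ n)
    (by linarith [gaussTail_nonneg x])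

end Probability

lemma tendsto_sub_log_two_mul_add_div_self (c : ℝ) :
    Tendsto (fun t => (t - log (2 * t) + c) / t) atTop (𝓝 1) := by
  have hlog : Tendsto (fun t : ℝ => log (2 * t) / t) atTop (𝓝 0) := by
    have h := (isLittleO_log_id_atTop.tendsto_div_nhds_zero.comp
      (tendsto_id.const_mul_atTop two_pos)).const_mul 2
    rw [mul_zero] at h
    refine h.congr' ?_
    filter_upwards [eventually_gt_atTop 0] with t ht
    simp only [Function.comp_apply, id_eq]
    field_simp
  have h := ((tendsto_const_nhds (x := (1 : ℝ))).sub hlog).add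
    (tendsto_const_nhds.div_atTop tendsto_id : Tendsto (fun t : ℝ => c / t) atTop (𝓝 0))
  rw [sub_zero, add_zero] at h
  refine h.congr' ?_
  filter_upwards [eventually_gt_atTop 0] with t ht
  field_simp

lemma tendsto_sub_log_two_mul_add_atTop (c : ℝ) :
    Tendsto (fun t => t - log (2 * t) + c) atTop atTop := by
  refine (tendsto_id.atTop_mul_pos one_pos (tendsto_sub_log_two_mul_add_div_self c)).congr' ?_
  filter_upwards [eventually_gt_atTop 0] with t ht
  simp only [id_eq]
  field_simp

lemma tendsto_log_inv_nhdsGT_zero : Tendsto (fun β : ℝ => log β⁻¹) (𝓝[>] 0) atTop :=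
  tendsto_log_atTop.comp tendsto_inv_nhdsGT_zero

lemma tendsto_aNorm_sq_div_two : Tendsto (fun β => log β⁻¹ - log (2 * log β⁻¹) +
    log ((2 * π) ^ (-(1 : ℝ) / 2))) (𝓝[>] 0) atTop :=
  (tendsto_sub_log_two_mul_add_atTop _).comp tendsto_log_inv_nhdsGT_zero

lemma tendsto_aNorm : Tendsto aNorm (𝓝[>] 0) atTop :=
  tendsto_sqrt_atTop.comp (tendsto_aNorm_sq_div_two.const_mul_atTop two_pos)

lemma aNorm_sq : ∀ᶠ β in 𝓝[>] 0, aNorm β ^ 2 =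
    2 * (log β⁻¹ - log (2 * log β⁻¹) + log ((2 * π) ^ (-(1 : ℝ) / 2))) := by
  filter_upwards [tendsto_aNorm_sq_div_two.eventually_ge_atTop 0] with β h
  rw [aNorm, sq_sqrt (by positivity)]

lemma tendsto_two_mul_log_inv_div_aNorm_sq :
    Tendsto (fun β => 2 * log β⁻¹ / aNorm β ^ 2) (𝓝[>] 0) (𝓝 1) := by
  have h := ((tendsto_sub_log_two_mul_add_div_self (log ((2 * π) ^ (-(1 : ℝ) / 2)))).comp
    tendsto_log_inv_nhdsGT_zero).inv₀ one_ne_zero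
  rw [inv_one] at h
  refine h.congr' ?_
  filter_upwards [aNorm_sq] with β hβ
  simp only [Function.comp_apply, hβ]
  field_simp

/-- This is what `aNorm` is designed for: `φ (aNorm β) / aNorm β ^ 2 ~ β`. -/
lemma gaussianPDFReal_aNorm : ∀ᶠ β in 𝓝[>] 0, φ (aNorm β) = 2 * β * log β⁻¹ := by
  filter_upwards [aNorm_sq, self_mem_nhdsWithin,
    tendsto_log_inv_nhdsGT_zero.eventually_gt_atTop 0] with β ha (hβ : 0 < β) hL
  have hc : exp (-log ((2 * π) ^ (-(1 : ℝ) / 2))) = √(2 * π) := by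
    rw [exp_neg, exp_log (by positivity), sqrt_eq_rpow, ← rpow_neg (by positivity)]
    norm_num
  have hβL : exp (-log β⁻¹) = β := by rw [log_inv, neg_neg, exp_log hβ]
  rw [gaussianPDFReal_zero_one, ha,
    show -(2 * (log β⁻¹ - log (2 * log β⁻¹) + log ((2 * π) ^ (-(1 : ℝ) / 2)))) / 2 =
      -log β⁻¹ + log (2 * log β⁻¹) + -log ((2 * π) ^ (-(1 : ℝ) / 2)) by ring,
    exp_add, exp_add, hc, hβL, exp_log (by positivity)]
  field_simp

lemma le_natCeil_div_mul (v : ℝ) {β : ℝ} (hβ : 0 < β) : v ≤ ⌈v / β⌉₊ * β :=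
  (div_le_iff₀ hβ).1 (Nat.le_ceil _)

lemma natCeil_div_mul_lt {v β : ℝ} (hv : 0 ≤ v) (hβ : 0 < β) : ⌈v / β⌉₊ * β < v + β := by
  have h := mul_lt_mul_of_pos_right (Nat.ceil_lt_add_one (div_nonneg hv hβ.le)) hβ
  rwa [add_mul, div_mul_cancel₀ _ hβ.ne', one_mul] at h

lemma setOf_forall_natCast_le_eq {Ω : Type*} (X : ℕ → Ω → ℝ) (u β : ℝ) :
    {ω | ∀ i : ℕ, u ≤ i → X i ω ≤ i * β} =
      {ω | ∀ i : ℕ, X (⌈u⌉₊ + i) ω ≤ ⌈u⌉₊ * β + i * β} := by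
  ext ω
  refine ⟨fun h i => ?_, fun h i hi => ?_⟩
  · have := h (⌈u⌉₊ + i) (by push_cast; linarith [Nat.le_ceil u, i.cast_nonneg (α := ℝ)])
    rwa [Nat.cast_add, add_mul] at this
  · obtain ⟨k, rfl⟩ := Nat.exists_eq_add_of_le (Nat.ceil_le.2 hi)
    rw [Nat.cast_add, add_mul]
    exact h k

section LastExit

variable (y : ℝ)

lemma tendsto_aNorm_add_div : Tendsto (fun β => aNorm β + y / aNorm β) (𝓝[>] 0) atTop :=
  tendsto_aNorm.atTop_add (tendsto_const_nhds.div_atTop tendsto_aNorm)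

lemma tendsto_gaussTailIntegral_aNorm_add_div_div :
    Tendsto (fun β => gaussTailIntegral (aNorm β + y / aNorm β) / β) (𝓝[>] 0)
      (𝓝 (exp (-y))) := by
  have h := ((tendsto_gaussTailIntegral_add_div_div y).comp tendsto_aNorm).mul
    tendsto_two_mul_log_inv_div_aNorm_sq
  rw [mul_one] at h
  refine h.congr' ?_
  filter_upwards [gaussianPDFReal_aNorm, self_mem_nhdsWithin,
    tendsto_aNorm.eventually_gt_atTop 0, tendsto_log_inv_nhdsGT_zero.eventually_gt_atTop 0]
    with β hφ (hβ : 0 < β) ha hL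
  simp only [Function.comp_apply, hφ]
  generalize log β⁻¹ = L at hL ⊢
  field_simp

lemma tendsto_natCeil_uNorm_mul : Tendsto (fun β => ⌈uNorm β y⌉₊ * β) (𝓝[>] 0) atTop :=
  tendsto_atTop_mono' _ (eventually_mem_nhdsWithin.mono fun _ hβ => le_natCeil_div_mul _ hβ)
    (tendsto_aNorm_add_div y)

/-- Rounding `aNorm β + y / aNorm β` up to the lattice `β ℕ` changes `gaussTailIntegral` by at
most `β` times a vanishing `gaussTail`. -/
lemma tendsto_gaussTailIntegral_natCeil_uNorm_mul_div :
    Tendsto (fun β => gaussTailIntegral (⌈uNorm β y⌉₊ * β) / β) (𝓝[>] 0) (𝓝 (exp (-y))) := by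
  have hT := tendsto_gaussTailIntegral_aNorm_add_div_div y
  have hQ := tendsto_gaussTail_atTop.comp (tendsto_aNorm_add_div y)
  refine tendsto_of_tendsto_of_tendsto_of_le_of_le' (by simpa using hT.sub hQ) hT ?_ ?_
  all_goals
    filter_upwards [self_mem_nhdsWithin, (tendsto_aNorm_add_div y).eventually_ge_atTop 0]
      with β (hβ : 0 < β) hv
    set v := aNorm β + y / aNorm β
    rw [show uNorm β y = v / β from rfl]
    set x₀ : ℝ := ⌈v / β⌉₊ * β
    have hle : v ≤ x₀ := le_natCeil_div_mul v hβ
    have hlt : x₀ < v + β := natCeil_div_mul_lt hv hβ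
    obtain ⟨hlow, hup⟩ := gaussTailIntegral_sub_bounds hle
  · rw [sub_le_iff_le_add, ← sub_le_iff_le_add', ← sub_div, div_le_iff₀ hβ]
    nlinarith [gaussTail_nonneg v]
  · refine div_le_div_of_nonneg_right ?_ hβ.le
    nlinarith [gaussTail_nonneg x₀]

end LastExit

/-- For an i.i.d. standard normal sequence `{ξ_i}_{i≥0}`, the last exit time
`τ(ξ) = max{i ≥ 0 : ξ_i > βi}` satisfies `P(τ(ξ) ≤ u_β(y)) → exp(-e^{-y})` as `β → 0⁺`,
where `{τ(ξ) ≤ u_β(y)} = {ξ_i ≤ iβ for all integers i ≥ u_β(y)}`. -/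
theorem lastExit_limit
    {Ω : Type*} [MeasurableSpace Ω] (μ : Measure Ω) [IsProbabilityMeasure μ]
    (X : ℕ → Ω → ℝ) (hmeas : ∀ i, Measurable (X i))
    (hindep : iIndepFun X μ)
    (hlaw : ∀ i, Measure.map (X i) μ = gaussianReal 0 1) (y : ℝ) :
    Tendsto (fun β : ℝ =>
        (μ {ω | ∀ i : ℕ, uNorm β y ≤ (i : ℝ) → X i ω ≤ (i : ℝ) * β}).toReal)
      (nhdsWithin 0 (Set.Ioi 0)) (nhds (Real.exp (-Real.exp (-y)))) := by
  have hx₀ := tendsto_natCeil_uNorm_mul y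
  have hT := tendsto_gaussTailIntegral_natCeil_uNorm_mul_div y
  have hQ := tendsto_gaussTail_atTop.comp hx₀
  have hlow :=
    ((tendsto_const_nhds (x := (1 : ℝ)).add (hQ.const_mul 2)).mul (hQ.add hT)).neg.rexp
  rw [mul_zero, add_zero, zero_add, one_mul] at hlow
  refine tendsto_of_tendsto_of_tendsto_of_le_of_le' hlow hT.neg.rexp ?_ ?_
  all_goals
    filter_upwards [self_mem_nhdsWithin, hx₀.eventually_gt_atTop 0,
      hQ.eventually (ge_mem_nhds one_half_pos)] with β (hβ : 0 < β) hx hQβ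
    rw [setOf_forall_natCast_le_eq]
    have hY := hindep.precomp (add_right_injective ⌈uNorm β y⌉₊)
  · exact exp_le_measureReal_forall_le (fun i => hmeas _) hY (fun i => hlaw _) hx hβ hQβ
  · exact measureReal_forall_le_le_exp (fun i => hmeas _) hY (fun i => hlaw _) hβ _
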